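/- arXiv:2009.00488 — 6 statements merged into one kernel-verified Lean document; each statement's English description precedes it below -/
import Mathlib

section
/- Let G and H be simple graphs on finite vertex types of cardinalities n₁ and n₂ respectively, and let G ∨ H denote their join. Then for every vertex u of G (viewed as the vertex Sum.inl u of G ∨ H), dp_{G∨H}(u) = X^{n₂} · dp_G(u) + X^{n₁} · dp(H) in ℕ[X]. -/
open Polynomial

/-- The neighbor finset of a vertex (with classical decidability of adjacency). -/
noncomputable def nbhd {V : Type*} [Fintype V] (G : SimpleGraph V) (v : V) : Finset V :=
  letI := Classical.decRel G.Adj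
  G.neighborFinset v

/-- The degree of a vertex (with classical decidability of adjacency). -/
noncomputable def degc {V : Type*} [Fintype V] (G : SimpleGraph V) (v : V) : ℕ :=
  (nbhd G v).card

/-- The degree polynomial of a vertex `v`: the coefficient of `X^i` is the number
of neighbors of `v` having degree `i`. -/
noncomputable def dp {V : Type*} [Fintype V] (G : SimpleGraph V) (v : V) : ℕ[X] :=
  ∑ w ∈ nbhd G v, X ^ degc G w

/-- The degree polynomial of a graph `G`: the coefficient of `X^i` is the number
of vertices of `G` of degree `i`. -/
noncomputable def dpG {V : Type*} [Fintype V] (G : SimpleGraph V) : ℕ[X] :=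
  ∑ v, X ^ degc G v

/-- The join of two simple graphs on disjoint vertex sets. -/
def graphJoin {α β : Type*} (G : SimpleGraph α) (H : SimpleGraph β) :
    SimpleGraph (α ⊕ β) where
  Adj x y :=
    match x, y with
    | Sum.inl a, Sum.inl b => G.Adj a b
    | Sum.inr a, Sum.inr b => H.Adj a b
    | Sum.inl _, Sum.inr _ => True
    | Sum.inr _, Sum.inl _ => True
  symm := ⟨by rintro (a | a) (b | b) h <;> simp_all [SimpleGraph.adj_comm]⟩
  loopless := ⟨by rintro (a | a) h <;> simp_all⟩

lemma mem_nbhd {V : Type*} [Fintype V] (G : SimpleGraph V) (v w : V) :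
    w ∈ nbhd G v ↔ G.Adj v w := by
  classical
  simp [nbhd]

section graphJoin

variable {α β : Type*} [Fintype α] [Fintype β] (G : SimpleGraph α) (H : SimpleGraph β)

lemma nbhd_graphJoin_inl (u : α) :
    nbhd (graphJoin G H) (Sum.inl u) = (nbhd G u).disjSum Finset.univ := by
  ext (x | x) <;> simp [mem_nbhd, graphJoin]

lemma nbhd_graphJoin_inr (v : β) :
    nbhd (graphJoin G H) (Sum.inr v) = Finset.univ.disjSum (nbhd H v) := by
  ext (x | x) <;> simp [mem_nbhd, graphJoin]

lemma degc_graphJoin_inl (u : α) :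
    degc (graphJoin G H) (Sum.inl u) = degc G u + Fintype.card β := by
  rw [degc, nbhd_graphJoin_inl, Finset.card_disjSum, Finset.card_univ, degc]

lemma degc_graphJoin_inr (v : β) :
    degc (graphJoin G H) (Sum.inr v) = Fintype.card α + degc H v := by
  rw [degc, nbhd_graphJoin_inr, Finset.card_disjSum, Finset.card_univ, degc]

end graphJoin

/-- Degree polynomial of a vertex of `G` inside the join `G ∨ H`:
`dp_{G∨H}(u) = X^{n₂}·dp_G(u) + X^{n₁}·dp(H)`. -/
theorem dp_join_inl {α β : Type*} [Fintype α] [Fintype β]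
    (G : SimpleGraph α) (H : SimpleGraph β) (u : α) :
    dp (graphJoin G H) (Sum.inl u)
      = X ^ (Fintype.card β) * dp G u + X ^ (Fintype.card α) * dpG H := by
  rw [dp, nbhd_graphJoin_inl, Finset.sum_disjSum, dp, dpG, Finset.mul_sum, Finset.mul_sum]
  simp only [degc_graphJoin_inl, degc_graphJoin_inr, pow_add, mul_comm]
end

section
/- Let G be a simple graph on a finite vertex type with n vertices, let Gᶜ be its complement, and let u be a vertex. Then dp_{Gᶜ}(u) = ∑_{w ≠ u, w ∉ N_G(u)} X^{(n-1) - deg_G(w)} in ℕ[X]; equivalently, dp_G(u) + X^{deg_G(u)} + reflect_{n-1}(dp_{Gᶜ}(u)) = dp(G), where reflect_{n-1} is the ℕ-linear map on polynomials of degree ≤ n−1 sending X^i to X^{(n-1)-i} (Mathlib's Polynomial.reflect (n-1)). -/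
open Polynomial

/-!
In `Gᶜ` a vertex `w` has degree `(n - 1) - deg_G w`, and the neighbours of `u` in `Gᶜ` are the
vertices other than `u` that are not `G`-neighbours of `u`; this gives the formula for
`dp_{Gᶜ}(u)`. Since `deg_G w ≤ n - 1`, reflecting at `n - 1` sends each term
`X^{(n-1) - deg_G w}` back to `X^{deg_G w}`. The vertex set is the disjoint union of `u`, its
`G`-neighbours and its `Gᶜ`-neighbours, so the three sums add up to `dp(G)`.
-/

namespace Polynomial

variable {R : Type*} [Semiring R]

theorem reflect_sum {ι : Type*} (s : Finset ι) (f : ι → R[X]) (N : ℕ) :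
    reflect N (∑ i ∈ s, f i) = ∑ i ∈ s, reflect N (f i) :=
  map_sum (⟨⟨reflect N, reflect_zero⟩, fun f g => reflect_add f g N⟩ : R[X] →+ R[X]) f s

theorem reflect_X_pow_sub {N k : ℕ} (hk : k ≤ N) : reflect N ((X : R[X]) ^ (N - k)) = X ^ k := by
  rw [reflect_monomial, revAt_le (Nat.sub_le N k), Nat.sub_sub_self hk]

end Polynomial

section

variable {V : Type*} [Fintype V] (G : SimpleGraph V)

theorem nbhd_eq_neighborFinset [DecidableRel G.Adj] (v : V) : nbhd G v = G.neighborFinset v := by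
  ext w
  simp [nbhd]

theorem degc_eq_degree [DecidableRel G.Adj] (v : V) : degc G v = G.degree v := by
  rw [degc, nbhd_eq_neighborFinset, SimpleGraph.card_neighborFinset_eq_degree]

theorem degc_le_card_sub_one (v : V) : degc G v ≤ Fintype.card V - 1 := by
  classical
  have := G.degree_lt_card_verts v
  rw [degc_eq_degree]
  omega

theorem degc_compl (v : V) : degc Gᶜ v = Fintype.card V - 1 - degc G v := by
  classical
  rw [degc_eq_degree, degc_eq_degree, SimpleGraph.degree_compl]

theorem nbhd_compl [DecidableEq V] [DecidableRel G.Adj] (u : V) :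
    nbhd Gᶜ u = Finset.univ.filter (fun w => w ≠ u ∧ ¬ G.Adj u w) := by
  ext w
  simp [nbhd, ne_comm]

theorem sum_univ_eq_sum_nbhd_add_add_sum_nbhd_compl {M : Type*} [AddCommMonoid M]
    (f : V → M) (u : V) :
    ∑ v, f v = ∑ w ∈ nbhd G u, f w + f u + ∑ w ∈ nbhd Gᶜ u, f w := by
  classical
  have h_adj : Finset.univ.filter (G.Adj u) = nbhd G u := by
    ext w
    simp [nbhd_eq_neighborFinset]
  have h_not_adj : Finset.univ.filter (fun w => ¬ G.Adj u w) = insert u (nbhd Gᶜ u) := by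
    ext w
    by_cases h : w = u <;> simp [nbhd_compl, h]
  rw [← Finset.sum_filter_add_sum_filter_not Finset.univ (G.Adj u), h_adj, h_not_adj,
    Finset.sum_insert (by simp [nbhd_compl]), add_assoc]

theorem reflect_dp_compl (u : V) :
    (dp Gᶜ u).reflect (Fintype.card V - 1) = ∑ w ∈ nbhd Gᶜ u, X ^ degc G w := by
  rw [dp, reflect_sum]
  refine Finset.sum_congr rfl fun w _ => ?_
  rw [degc_compl, reflect_X_pow_sub (degc_le_card_sub_one G w)]

end

/-- Degree polynomial of a vertex in the complement graph:
`dp_{Gᶜ}(u) = ∑_{w ≠ u, w ∉ N(u)} X^{(n-1) - deg w}`; equivalently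
`dp_G(u) + X^{deg u} + reflect_{n-1}(dp_{Gᶜ}(u)) = dp(G)`. -/
theorem dp_compl {V : Type*} [Fintype V] [DecidableEq V]
    (G : SimpleGraph V) [DecidableRel G.Adj] (u : V) :
    dp Gᶜ u
        = ∑ w ∈ Finset.univ.filter (fun w => w ≠ u ∧ ¬ G.Adj u w),
            X ^ ((Fintype.card V - 1) - degc G w)
      ∧ dp G u + X ^ (degc G u) + (dp Gᶜ u).reflect (Fintype.card V - 1) = dpG G := by
  refine ⟨?_, ?_⟩
  · rw [dp, nbhd_compl]
    exact Finset.sum_congr rfl fun w _ => by rw [degc_compl]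
  · rw [reflect_dp_compl, dp, dpG, sum_univ_eq_sum_nbhd_add_add_sum_nbhd_compl G]
end

section
/- There is no finite simple graph G whose multiset of degree polynomials of vertices equals {2X, X^2, X, X, X}; i.e., there is no simple graph G on a finite vertex type such that the multiset (Multiset image of dp_G over all vertices) is {2•X, X^2, X, X, X} in ℕ[X]. -/
open Polynomial

/-- The multiset of polynomials {2 • X, X ^ 2, X, X, X} is not realizable as the multiset of vertex
degree polynomials of a finite simple graph. -/
theorem not_realizable_s1 :
    ¬ ∃ (V : Type) (inst : Fintype V) (G : SimpleGraph V),
        (@Finset.univ V inst).val.map (@dp V inst G)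
          = ({2 • X, X ^ 2, X, X, X} : Multiset (Polynomial ℕ)) := by
  rintro ⟨V, inst, G, h⟩
  have hsum : (∑ v, dp G v)
      = ({2 • X, X ^ 2, X, X, X} : Multiset (Polynomial ℕ)).sum := by
    rw [← h]
    rfl
  have hS : (∑ v, dp G v) = ∑ w, (degc G w) • (X : ℕ[X]) ^ degc G w := by
    unfold dp
    rw [Finset.sum_comm' (t' := Finset.univ) (s' := fun w => nbhd G w)
      (fun v w => by
        letI := Classical.decRel G.Adj
        simp only [nbhd, SimpleGraph.mem_neighborFinset, Finset.mem_univ,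
          true_and, and_true]
        exact G.adj_comm v w)]
    refine Finset.sum_congr rfl fun w _ => ?_
    rw [Finset.sum_const]
    rfl
  have hdvd : 2 ∣ (∑ v, dp G v).coeff 2 := by
    rw [hS, Polynomial.finset_sum_coeff]
    refine Finset.dvd_sum fun w _ => ?_
    rw [Polynomial.coeff_smul, Polynomial.coeff_X_pow, smul_eq_mul]
    by_cases hw : degc G w = 2
    · simp [hw]
    · simp [Ne.symm hw]
  rw [hsum] at hdvd
  simp [Polynomial.coeff_X_pow, Polynomial.coeff_smul, Polynomial.coeff_X] at hdvd
end

section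
/- There is no finite simple graph G whose multiset of degree polynomials of vertices equals {2X, X^2, X^2, X, X, X}; i.e., there is no simple graph G on a finite vertex type such that the multiset (Multiset image of dp_G over all vertices) is {2•X, X^2, X^2, X, X, X} in ℕ[X]. -/
open Polynomial

/-- The multiset of polynomials {2 • X, X ^ 2, X ^ 2, X, X, X} is not realizable as the multiset of vertex
degree polynomials of a finite simple graph. -/
theorem not_realizable_s2 :
    ¬ ∃ (V : Type) (inst : Fintype V) (G : SimpleGraph V),
        (@Finset.univ V inst).val.map (@dp V inst G)
          = ({2 • X, X ^ 2, X ^ 2, X, X, X} : Multiset (Polynomial ℕ)) := by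
  rintro ⟨V, inst, G, h⟩
  letI := Classical.decRel G.Adj
  have hdeg : ∀ v : V, (dp G v).eval 1 = degc G v := by
    intro v
    simp [dp, degc, eval_finset_sum]
  have hsum : ∑ v : V, degc G v = 7 := by
    have h2 := congrArg (fun m => (m.map (Polynomial.eval 1)).sum) h
    simp [Multiset.map_map, Function.comp, hdeg] at h2
    exact h2
  have hdd : ∀ v : V, degc G v = G.degree v := fun v => rfl
  have heven := SimpleGraph.sum_degrees_eq_twice_card_edges G
  simp only [hdd] at hsum
  omega
end

section
/- There is no finite simple graph G whose multiset of degree polynomials of vertices equals {2X^2, X, X, X, X}; i.e., there is no simple graph G on a finite vertex type such that the multiset (Multiset image of dp_G over all vertices) is {2•X^2, X, X, X, X} in ℕ[X]. -/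
open Polynomial

lemma eval_one_dp {V : Type*} [Fintype V] (G : SimpleGraph V) (v : V) :
    (dp G v).eval 1 = degc G v := by
  simp [dp, degc, Polynomial.eval_finset_sum]

lemma mem_nbhd_ne {V : Type*} [Fintype V] (G : SimpleGraph V) {v w : V}
    (h : w ∈ nbhd G v) : w ≠ v := by
  simp only [nbhd, SimpleGraph.mem_neighborFinset] at h
  exact fun hw => G.irrefl (hw ▸ h)

lemma hne12 : (2 • X ^ 2 : ℕ[X]) ≠ X := by
  intro he
  have := congrArg (Polynomial.eval 1) he
  simp at this

lemma hne12' : (2 * X ^ 2 : ℕ[X]) ≠ X := by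
  intro he
  have := congrArg (Polynomial.eval 1) he
  simp at this

/-- The multiset of polynomials {2 • X ^ 2, X, X, X, X} is not realizable as the multiset of vertex
degree polynomials of a finite simple graph. -/
theorem not_realizable_s3 :
    ¬ ∃ (V : Type) (inst : Fintype V) (G : SimpleGraph V),
        (@Finset.univ V inst).val.map (@dp V inst G)
          = ({2 • X ^ 2, X, X, X, X} : Multiset (Polynomial ℕ)) := by
  rintro ⟨V, inst, G, h⟩
  have hmem : ∀ v : V, dp G v = 2 • X ^ 2 ∨ dp G v = X := by
    intro v
    have hv : dp G v ∈ ({2 • X ^ 2, X, X, X, X} : Multiset ℕ[X]) := by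
      rw [← h]
      exact Multiset.mem_map_of_mem _ (Finset.mem_univ_val v)
    simp only [Multiset.insert_eq_cons, Multiset.mem_cons, Multiset.mem_singleton] at hv
    tauto
  have hcount : Multiset.count (2 • X ^ 2 : ℕ[X]) (Finset.univ.val.map (dp G)) = 1 := by
    rw [h]
    simp [Multiset.insert_eq_cons, Multiset.count_cons, hne12, hne12']
  obtain ⟨v₀, -, hv₀⟩ := Multiset.mem_map.mp (Multiset.count_pos.mp (hcount ▸ Nat.one_pos))
  have huniq : ∀ w : V, dp G w = 2 • X ^ 2 → w = v₀ := by
    intro w hw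
    rw [Multiset.count_map] at hcount
    obtain ⟨a, ha⟩ := Multiset.card_eq_one.mp hcount
    have hwa : w ∈ Multiset.filter (fun b => (2 • X ^ 2 : ℕ[X]) = dp G b) Finset.univ.val := by
      rw [Multiset.mem_filter]; exact ⟨Finset.mem_univ_val w, hw.symm⟩
    have hva : v₀ ∈ Multiset.filter (fun b => (2 • X ^ 2 : ℕ[X]) = dp G b) Finset.univ.val := by
      rw [Multiset.mem_filter]; exact ⟨Finset.mem_univ_val v₀, hv₀.symm⟩
    rw [ha, Multiset.mem_singleton] at hwa hva
    rw [hwa, hva]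
  have hdeg : ∀ w ∈ nbhd G v₀, degc G w = 1 := by
    intro w hw
    rcases hmem w with h2 | h1
    · exact absurd (huniq w h2) (mem_nbhd_ne G hw)
    · rw [← eval_one_dp, h1, Polynomial.eval_X]
  have hcard : (nbhd G v₀).card = 2 := by
    have := eval_one_dp G v₀
    rw [hv₀] at this
    simpa [degc] using this.symm
  have : dp G v₀ = 2 • X := by
    rw [dp, Finset.sum_congr rfl (fun w hw => by rw [hdeg w hw, pow_one]),
      Finset.sum_const, hcard]
  rw [hv₀] at this
  have := congrArg (fun p : ℕ[X] => p.coeff 2) this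
  simp [Polynomial.coeff_X] at this
end

section
/- There exist two simple graphs G₁ and G₂ on the vertex type Fin 6 that are not isomorphic as graphs but have equal multisets of degree polynomials of vertices; i.e., ∃ G₁ G₂ : SimpleGraph (Fin 6), (the Multiset image of dp_{G₁} over all vertices) = (the Multiset image of dp_{G₂} over all vertices) ∧ ¬ Nonempty (G₁ ≃g G₂). -/
open Polynomial

/-!
The hexagon `C₆` and two disjoint triangles `2K₃` are both 2-regular, so in either graph every
vertex has degree polynomial `2X²`; they are not isomorphic because `C₆` is triangle-free.
-/

namespace SimpleGraph

variable {V : Type*} [Fintype V] (G : SimpleGraph V) [DecidableRel G.Adj]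

theorem nbhd_eq_neighborFinset (v : V) : nbhd G v = G.neighborFinset v := by
  ext w
  simp [nbhd, mem_neighborFinset]

theorem degc_eq_degree (v : V) : degc G v = G.degree v := by
  rw [degc, nbhd_eq_neighborFinset, card_neighborFinset_eq_degree]

variable {G} {d : ℕ}

theorem IsRegularOfDegree.dp_eq (hG : G.IsRegularOfDegree d) (v : V) :
    dp G v = d • (X ^ d : ℕ[X]) := by
  have hdeg : ∀ w ∈ G.neighborFinset v, (X ^ degc G w : ℕ[X]) = X ^ d := fun w _ => by
    rw [degc_eq_degree, hG.degree_eq]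
  rw [dp, nbhd_eq_neighborFinset, Finset.sum_congr rfl hdeg, Finset.sum_const,
    card_neighborFinset_eq_degree, hG.degree_eq]

theorem IsRegularOfDegree.map_dp_eq {H : SimpleGraph V} [DecidableRel H.Adj]
    (hG : G.IsRegularOfDegree d) (hH : H.IsRegularOfDegree d) :
    Finset.univ.val.map (dp G) = Finset.univ.val.map (dp H) :=
  Multiset.map_congr rfl fun v _ => by rw [hG.dp_eq, hH.dp_eq]

theorem cycleGraph_isRegularOfDegree_two (n : ℕ) : (cycleGraph (n + 3)).IsRegularOfDegree 2 :=
  fun _ => cycleGraph_degree_three_le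

open Fin.CommRing in
theorem cycleGraph_cliqueFree_three (n : ℕ) : (cycleGraph (n + 4)).CliqueFree 3 := by
  intro s hs
  obtain ⟨a, b, c, hab, hac, hbc, -⟩ := is3Clique_iff.1 hs
  have h1 : (1 : Fin (n + 4)) ≠ 0 := by simp
  have h3 : (3 : Fin (n + 4)) ≠ 0 := by
    simp [Fin.ext_iff, Nat.mod_eq_of_lt (show 3 < n + 4 by omega)]
  have sub_eq {u v : Fin (n + 4)} (h : (cycleGraph (n + 4)).Adj u v) : u - v = 1 ∨ u - v = -1 :=
    h.imp_right fun h => by rw [← h, neg_sub]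
  -- `(a - b) + (b - c) = a - c` with all three differences `±1` forces `1 = 0` or `3 = 0`.
  have key := sub_add_sub_cancel a b c
  rcases sub_eq hab with h | h <;> rcases sub_eq hbc with h' | h' <;>
    rcases sub_eq hac with h'' | h'' <;> rw [h, h', h''] at key <;>
    first
    | exact h1 (by linear_combination key)
    | exact h1 (by linear_combination -key)
    | exact h3 (by linear_combination key)
    | exact h3 (by linear_combination -key)

end SimpleGraph

open SimpleGraph

def twoTriangles : SimpleGraph (Fin 6) where
  Adj v w := v ≠ w ∧ v.val / 3 = w.val / 3
  symm := ⟨fun _ _ h => ⟨h.1.symm, h.2.symm⟩⟩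
  loopless := ⟨fun _ h => h.1 rfl⟩

instance : DecidableRel twoTriangles.Adj := fun v w =>
  inferInstanceAs (Decidable (v ≠ w ∧ v.val / 3 = w.val / 3))

theorem twoTriangles_isRegularOfDegree_two : twoTriangles.IsRegularOfDegree 2 := by
  unfold IsRegularOfDegree
  decide

theorem twoTriangles_not_cliqueFree_three : ¬twoTriangles.CliqueFree 3 :=
  fun h => h {0, 1, 2} (is3Clique_triple_iff.2 (by decide))

/-- There exist two non-isomorphic simple graphs on `Fin 6` with equal multisets of
vertex degree polynomials. -/
theorem exists_nonisomorphic_same_dp_multiset :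
    ∃ G₁ G₂ : SimpleGraph (Fin 6),
      Finset.univ.val.map (dp G₁) = Finset.univ.val.map (dp G₂)
      ∧ ¬ Nonempty (G₁ ≃g G₂) :=
  ⟨cycleGraph 6, twoTriangles,
    (cycleGraph_isRegularOfDegree_two 3).map_dp_eq twoTriangles_isRegularOfDegree_two,
    fun ⟨e⟩ => twoTriangles_not_cliqueFree_three
      ((cycleGraph_cliqueFree_three 2).comap e.isContained')⟩
end
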